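/- With W = ΠV and η : T(V) → T(W) the standard isomorphism, let δ_k : W^{⊗k} → W be a homogeneous map, μ_k = η₁⁻¹∘δ_k∘η_k, δ̂_k the Z/2-coderivation extension of δ_k on T(W), and μ̂_k the (Z/2×Z)-coderivation extension of μ_k on T(V). Then η⁻¹∘δ̂_k∘η applied to v₁⊗···⊗v_n equals (-1)^{(n-k)|μ_k|} μ̂_k(v₁⊗···⊗v_n); in particular |μ_k| = |δ_k| + (k-1) mod 2. -/

import Mathlib

/-!
Both coderivations are sums over the position `i` of the block of `K` factors that `δ_K`,
resp. `μ_K`, replaces, so the claim is an identity of signs, term by term. The sign of `η` on a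
word is `Σ_j (number of later factors) * |v_j|`; it splits over prefix, block and suffix. The
block's internal contribution is exactly the sign relating `μ_K` to `δ_K`, and what remains
agrees modulo 2 on both sides.
-/

open scoped TensorProduct

/-- `(-1)^a` for `a : ZMod 2`. -/
def pSign (k : Type*) [CommRing k] (a : ZMod 2) : k := (-1 : k) ^ a.val

/-- The reduced tensor coalgebra `T(V) = ⊕_{n ≥ 1} V^{⊗ n}` (degree `n+1` in slot `n`). -/
abbrev TCoalg (k V : Type*) [CommRing k] [AddCommGroup V] [Module k V] :=
  DirectSum ℕ (fun n => ⨂[k] (_ : Fin (n + 1)), V)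

/-- The pure tensor `v₁ ⊗ ⋯ ⊗ v_{n+1}` as an element of `T(V)`. -/
noncomputable def elt (k : Type*) [CommRing k] {V : Type*} [AddCommGroup V] [Module k V]
    (n : ℕ) (v : Fin (n + 1) → V) : TCoalg k V :=
  DirectSum.lof k ℕ (fun m => ⨂[k] (_ : Fin (m + 1)), V) n (PiTensorProduct.tprod k v)

open Finset

lemma pSign_add {k : Type*} [CommRing k] (a b : ZMod 2) :
    pSign k (a + b) = pSign k a * pSign k b := by
  rw [pSign, pSign, pSign, ← pow_add, ZMod.val_add, ← neg_one_pow_eq_pow_mod_two]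

lemma sum_fin_ite_lt_eq_sum_range {M : Type*} [AddCommMonoid M] {N i : ℕ} (h : i ≤ N)
    (f : ℕ → M) :
    ∑ j : Fin N, (if (j : ℕ) < i then f j else 0) = ∑ j ∈ range i, f j := by
  rw [Fin.sum_univ_eq_sum_range (fun j => if j < i then f j else 0), ← sum_filter, range_eq_Ico,
    Ico_filter_lt, min_eq_right h, range_eq_Ico]

section Koszul

variable {R : Type*} [CommSemiring R]

/-- The exponent of the sign of `η` on the factors `a, …, b - 1`: each parity counted once for
every factor after it. -/
def koszulExponent (P : ℕ → R) (a b : ℕ) : R :=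
  ∑ j ∈ Ico a b, ((b - 1 - j : ℕ) : R) * P j

lemma koszulExponent_consecutive {a b c : ℕ} (hab : a ≤ b) (hbc : b ≤ c) (P : ℕ → R) :
    koszulExponent P a c
      = koszulExponent P a b + ((c - b : ℕ) : R) * ∑ j ∈ Ico a b, P j
        + koszulExponent P b c := by
  have hfirst : ∑ j ∈ Ico a b, ((c - 1 - j : ℕ) : R) * P j
      = koszulExponent P a b + ((c - b : ℕ) : R) * ∑ j ∈ Ico a b, P j := by
    rw [koszulExponent, mul_sum, ← sum_add_distrib]
    refine sum_congr rfl fun j hj => ?_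
    rw [← add_mul, ← Nat.cast_add, show c - 1 - j = b - 1 - j + (c - b) by
      have := (mem_Ico.1 hj).2; omega]
  rw [koszulExponent, ← sum_Ico_consecutive _ hab hbc, hfirst]
  rfl

lemma koszulExponent_congr {P Q : ℕ → R} {a b : ℕ} (h : ∀ j ∈ Ico a b, P j = Q j) :
    koszulExponent P a b = koszulExponent Q a b :=
  sum_congr rfl fun j hj => by rw [h j hj]

lemma koszulExponent_add_right (P : ℕ → R) (a b d : ℕ) :
    koszulExponent (fun j => P (j + d)) a b = koszulExponent P (a + d) (b + d) := by
  rw [koszulExponent, koszulExponent, ← sum_Ico_add']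
  refine sum_congr rfl fun j _ => ?_
  rw [show b + d - 1 - (j + d) = b - 1 - j by omega]

lemma koszulExponent_self_add_one (P : ℕ → R) (a : ℕ) : koszulExponent P a (a + 1) = 0 := by
  rw [koszulExponent, Nat.Ico_succ_singleton, sum_singleton, Nat.add_sub_cancel, Nat.sub_self,
    Nat.cast_zero, zero_mul]

lemma koszulExponent_splice_word {i K : ℕ} (hK : 1 ≤ K) (r : ℕ) (P : ℕ → R) (s : R) :
    koszulExponent (fun j => if j < i then P j else if j = i then s else P (j + K - 1)) 0 (i + r + 1)
      = koszulExponent P 0 i + ((r + 1 : ℕ) : R) * ∑ j ∈ range i, P j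
        + (r * s + koszulExponent P (i + K) (i + K + r)) := by
  set Q : ℕ → R := fun j => if j < i then P j else if j = i then s else P (j + K - 1)
  have hprefix : koszulExponent Q 0 i = koszulExponent P 0 i :=
    koszulExponent_congr fun j hj => if_pos (mem_Ico.1 hj).2
  have hsum : ∑ j ∈ Ico 0 i, Q j = ∑ j ∈ range i, P j := by
    rw [range_eq_Ico]
    exact sum_congr rfl fun j hj => if_pos (mem_Ico.1 hj).2
  have hsuffix : koszulExponent Q (i + 1) (i + r + 1) = koszulExponent P (i + K) (i + K + r) := by
    rw [koszulExponent_congr (Q := fun j => P (j + (K - 1))) fun j hj => ?_,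
      koszulExponent_add_right, show i + 1 + (K - 1) = i + K by omega,
      show i + r + 1 + (K - 1) = i + K + r by omega]
    have := (mem_Ico.1 hj).1
    simp only [Q, if_neg (show ¬ j < i by omega), if_neg (show j ≠ i by omega)]
    exact congrArg P (by omega)
  rw [koszulExponent_consecutive (Nat.zero_le i) (c := i + r + 1) (by omega),
    koszulExponent_consecutive (a := i) (b := i + 1) (c := i + r + 1) (by omega) (by omega),
    koszulExponent_self_add_one, Nat.Ico_succ_singleton, sum_singleton, hprefix, hsum, hsuffix,
    show i + r + 1 - i = r + 1 by omega, show i + r + 1 - (i + 1) = r by omega]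
  simp [Q]

lemma sum_fin_eq_koszulExponent (P : ℕ → R) (n : ℕ) :
    ∑ j : Fin (n + 1), ((n - j : ℕ) : R) * P j = koszulExponent P 0 (n + 1) := by
  rw [Fin.sum_univ_eq_sum_range (fun j => ((n - j : ℕ) : R) * P j), koszulExponent, range_eq_Ico,
    Nat.add_sub_cancel]

lemma sum_fin_block_eq_koszulExponent (P : ℕ → R) (i K : ℕ) :
    ∑ t : Fin K, ((K - 1 - t : ℕ) : R) * P (i + t) = koszulExponent P i (i + K) := by
  have hshift : koszulExponent P i (i + K) = koszulExponent (fun j => P (j + i)) 0 K := by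
    rw [koszulExponent_add_right, zero_add, add_comm K]
  rw [hshift, koszulExponent, ← range_eq_Ico,
    Fin.sum_univ_eq_sum_range (fun t => ((K - 1 - t : ℕ) : R) * P (i + t))]
  simp only [add_comm i]

end Koszul

lemma koszulExponent_splice {n K i : ℕ} (hK : 1 ≤ K) (hi : i + K ≤ n + 1) (P : ℕ → ZMod 2)
    (qd : ZMod 2) :
    koszulExponent P 0 (n + 1) + (∑ j ∈ range i, P j + i) * qd
      = ((n + 1 - K : ℕ) : ZMod 2) * (qd + ((K - 1 : ℕ) : ZMod 2))
        + (∑ j ∈ range i, P j) * (qd + ((K - 1 : ℕ) : ZMod 2)) + ((i * (K - 1) : ℕ) : ZMod 2)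
        + koszulExponent P i (i + K)
        + koszulExponent (fun j => if j < i then P j
            else if j = i then ∑ j ∈ Ico i (i + K), P j + (qd + ((K - 1 : ℕ) : ZMod 2))
            else P (j + K - 1)) 0 (n + 1 - K + 1) := by
  obtain ⟨r, hr⟩ : ∃ r, n + 1 = i + K + r := ⟨n + 1 - (i + K), by omega⟩
  rw [show n + 1 - K + 1 = i + r + 1 by omega, show n + 1 - K = i + r by omega,
    koszulExponent_splice_word hK, hr,
    koszulExponent_consecutive (Nat.zero_le i) (c := i + K + r) (by omega),
    koszulExponent_consecutive (a := i) (b := i + K) (c := i + K + r) (by omega) (by omega),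
    show i + K + r - i = K + r by omega, show i + K + r - (i + K) = r by omega, ← range_eq_Ico]
  obtain ⟨K, rfl⟩ : ∃ K', K = K' + 1 := ⟨K - 1, by omega⟩
  push_cast
  -- the two sides differ by an even multiple
  ring_nf
  reduce_mod_char

section Splice

variable {α : Type*} {n K : ℕ}

/-- The word obtained by replacing the factors `i, …, i + K - 1` by `x`, as written out in the
extension formulas for `δ̂_K` and `μ̂_K`. -/
def splice (v : Fin (n + 1) → α) (i : ℕ) (hi : i + K ≤ n + 1) (x : α) :
    Fin (n + 1 - K + 1) → α :=
  fun j => if h : (j : ℕ) < i then v ⟨j, by omega⟩ else if (j : ℕ) = i then x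
    else v ⟨j + K - 1, by have := j.2; omega⟩

def block (v : Fin (n + 1) → α) (i : ℕ) (hi : i + K ≤ n + 1) : Fin K → α :=
  fun t => v ⟨i + t, by omega⟩

lemma splice_natFun (P : ℕ → α) (i : ℕ) (hi : i + K ≤ n + 1) (x : α) :
    splice (fun j : Fin (n + 1) => P j) i hi x
      = fun j : Fin (n + 1 - K + 1) =>
          if (j : ℕ) < i then P j else if (j : ℕ) = i then x else P (j + K - 1) := by
  funext j
  simp only [splice]
  split_ifs <;> rfl

lemma splice_eq_update (v : Fin (n + 1) → α) (i : ℕ) (hi : i + K ≤ n + 1) (x y : α) :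
    splice v i hi y = Function.update (splice v i hi x) ⟨i, by omega⟩ y := by
  funext j
  rcases eq_or_ne j ⟨i, by omega⟩ with rfl | hj
  · simp [splice]
  · rw [Function.update_of_ne hj]
    have hj' : (j : ℕ) ≠ i := fun h => hj (Fin.ext h)
    simp only [splice, hj', if_false]

lemma splice_rel {β : Type*} (R : α → β → Prop) {v : Fin (n + 1) → α} {p : Fin (n + 1) → β}
    (hv : ∀ j, R (v j) (p j)) {i : ℕ} (hi : i + K ≤ n + 1) {x : α} {s : β} (hx : R x s)
    (j : Fin (n + 1 - K + 1)) : R (splice v i hi x j) (splice p i hi s j) := by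
  unfold splice
  split_ifs
  exacts [hv _, hx, hv _]

end Splice

lemma elt_splice_smul {k V : Type*} [CommRing k] [AddCommGroup V] [Module k V] {n K : ℕ}
    (v : Fin (n + 1) → V) (i : ℕ) (hi : i + K ≤ n + 1) (c : k) (x : V) :
    elt k (n + 1 - K) (splice v i hi (c • x)) = c • elt k (n + 1 - K) (splice v i hi x) := by
  rw [splice_eq_update v i hi x (c • x), elt, MultilinearMap.map_update_smul,
    ← splice_eq_update, map_smul, elt]

lemma koszul_sign_splice {n K : ℕ} (hK : 1 ≤ K) (p : Fin (n + 1) → ZMod 2) (qd : ZMod 2) (i : ℕ)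
    (hi : i + K ≤ n + 1) :
    ∑ j : Fin (n + 1), ((n - j : ℕ) : ZMod 2) * p j
        + (∑ j : Fin (n + 1), if (j : ℕ) < i then p j + 1 else 0) * qd
      = ((n + 1 - K : ℕ) : ZMod 2) * (qd + ((K - 1 : ℕ) : ZMod 2))
        + (∑ j : Fin (n + 1), if (j : ℕ) < i then p j else 0) * (qd + ((K - 1 : ℕ) : ZMod 2))
        + ((i * (K - 1) : ℕ) : ZMod 2)
        + ∑ t : Fin K, ((K - 1 - t : ℕ) : ZMod 2) * block p i hi t
        + ∑ j : Fin (n + 1 - K + 1), ((n + 1 - K - j : ℕ) : ZMod 2)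
            * splice p i hi (∑ t, block p i hi t + (qd + ((K - 1 : ℕ) : ZMod 2))) j := by
  obtain ⟨P, rfl⟩ : ∃ P : ℕ → ZMod 2, p = fun j : Fin (n + 1) => P j :=
    ⟨fun j => if h : j < n + 1 then p ⟨j, h⟩ else 0, funext fun j => by simp [j.2]⟩
  have hblock : ∑ t : Fin K, block (fun j : Fin (n + 1) => P j) i hi t
      = ∑ j ∈ Ico i (i + K), P j := by
    rw [sum_Ico_eq_sum_range, Nat.add_sub_cancel_left]
    exact Fin.sum_univ_eq_sum_range (fun t => P (i + t)) K
  rw [hblock, splice_natFun]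
  beta_reduce
  simp only [block]
  rw [sum_fin_eq_koszulExponent, sum_fin_block_eq_koszulExponent,
    sum_fin_eq_koszulExponent (n := n + 1 - K) (fun j => if j < i then P j
      else if j = i then ∑ j ∈ Ico i (i + K), P j + (qd + ((K - 1 : ℕ) : ZMod 2))
      else P (j + K - 1)),
    sum_fin_ite_lt_eq_sum_range (by omega),
    sum_fin_ite_lt_eq_sum_range (f := fun j => P j + 1) (by omega), sum_add_distrib, sum_const,
    card_range, nsmul_one]
  exact koszulExponent_splice hK hi P qd

lemma sum_add_one_add_one_eq {K : ℕ} (hK : 1 ≤ K) (q : Fin K → ZMod 2) (qd : ZMod 2) :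
    ∑ i, (q i + 1) + qd + 1 = ∑ i, q i + (qd + ((K - 1 : ℕ) : ZMod 2)) := by
  obtain ⟨K, rfl⟩ : ∃ K', K = K' + 1 := ⟨K - 1, by omega⟩
  rw [sum_add_distrib, sum_const, card_univ, Fintype.card_fin, nsmul_one, Nat.add_sub_cancel]
  push_cast
  ring_nf
  reduce_mod_char

lemma coderivation_term_conj {k V : Type*} [CommRing k] [AddCommGroup V] [Module k V]
    {𝒱 : ZMod 2 → Submodule k V} {η : TCoalg k V →ₗ[k] TCoalg k V}
    (hη : ∀ (n : ℕ) (v : Fin (n + 1) → V) (p : Fin (n + 1) → ZMod 2), (∀ i, v i ∈ 𝒱 (p i)) →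
      η (elt k n v)
        = pSign k (∑ i : Fin (n + 1), ((n - (i : ℕ) : ℕ) : ZMod 2) * p i) • elt k n v)
    {K : ℕ} (hK : 1 ≤ K) {δk μk : (⨂[k] (_ : Fin K), V) →ₗ[k] V} {qd : ZMod 2}
    (hδk : ∀ (u : Fin K → V) (q : Fin K → ZMod 2), (∀ i, u i ∈ 𝒱 (q i)) →
      δk (PiTensorProduct.tprod k u) ∈ 𝒱 (∑ i, q i + (qd + ((K - 1 : ℕ) : ZMod 2))))
    (hμk : ∀ (u : Fin K → V) (q : Fin K → ZMod 2), (∀ i, u i ∈ 𝒱 (q i)) →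
      μk (PiTensorProduct.tprod k u)
        = pSign k (∑ i : Fin K, ((K - 1 - (i : ℕ) : ℕ) : ZMod 2) * q i) •
            δk (PiTensorProduct.tprod k u))
    {n : ℕ} {v : Fin (n + 1) → V} {p : Fin (n + 1) → ZMod 2} (hp : ∀ j, v j ∈ 𝒱 (p j))
    (i : ℕ) (hi : i + K ≤ n + 1) :
    pSign k (∑ j : Fin (n + 1), ((n - j : ℕ) : ZMod 2) * p j) •
        pSign k ((∑ j : Fin (n + 1), if (j : ℕ) < i then p j + 1 else 0) * qd) •
          elt k (n + 1 - K) (splice v i hi (δk (PiTensorProduct.tprod k (block v i hi))))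
      = pSign k (((n + 1 - K : ℕ) : ZMod 2) * (qd + ((K - 1 : ℕ) : ZMod 2))) •
          η (pSign k ((∑ j : Fin (n + 1), if (j : ℕ) < i then p j else 0)
                * (qd + ((K - 1 : ℕ) : ZMod 2)) + ((i * (K - 1) : ℕ) : ZMod 2)) •
            elt k (n + 1 - K) (splice v i hi (μk (PiTensorProduct.tprod k (block v i hi))))) := by
  have hblock : ∀ t, block v i hi t ∈ 𝒱 (block p i hi t) := fun t => hp _
  rw [hμk _ _ hblock, elt_splice_smul, map_smul, map_smul,
    hη _ _ _ (splice_rel (fun x s => x ∈ 𝒱 s) hp hi (hδk _ _ hblock))]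
  simp only [smul_smul, ← pSign_add]
  congr 2
  linear_combination koszul_sign_splice hK p qd i hi

/-- let `W = ΠV` (identified with `V` as a module; the `W`-parity of a
`V`-homogeneous element of parity `s` is `s + 1`), `η : T(V) → T(W)` the standard
isomorphism, `δ_K : W^{⊗K} → W` homogeneous of `W`-parity `qd`,
`μ_K = η₁⁻¹ ∘ δ_K ∘ η_K`, `D = δ̂_K` the `ZMod 2`-coderivation extension of `δ_K`
on `T(W)` and `M = μ̂_K` the `ZMod 2 × ℤ`-coderivation extension of `μ_K` on `T(V)`.
Then `|μ_K| = |δ_K| + (K-1)` and, on `v₁⊗⋯⊗v_n`,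
`δ̂_K ∘ η = (-1)^{(n-K)|μ_K|} η ∘ μ̂_K` (i.e. `η⁻¹∘δ̂_K∘η = (-1)^{(n-K)|μ_K|} μ̂_K`). -/
theorem conjugated_coderivation_sign {k V : Type*} [Field k] [AddCommGroup V] [Module k V]
    (𝒱 : ZMod 2 → Submodule k V)
    (η : TCoalg k V →ₗ[k] TCoalg k V)
    (hη : ∀ (n : ℕ) (v : Fin (n + 1) → V) (p : Fin (n + 1) → ZMod 2),
      (∀ i, v i ∈ 𝒱 (p i)) →
      η (elt k n v)
        = pSign k (∑ i : Fin (n + 1), ((n - (i : ℕ) : ℕ) : ZMod 2) * p i) • elt k n v)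
    (K : ℕ) (hK : 1 ≤ K)
    (δk : (⨂[k] (_ : Fin K), V) →ₗ[k] V) (qd : ZMod 2)
    (hδk : ∀ (u : Fin K → V) (q : Fin K → ZMod 2), (∀ i, u i ∈ 𝒱 (q i)) →
      δk (PiTensorProduct.tprod k u) ∈ 𝒱 ((∑ i, (q i + 1)) + qd + 1))
    (μk : (⨂[k] (_ : Fin K), V) →ₗ[k] V)
    (hμk : ∀ (u : Fin K → V) (q : Fin K → ZMod 2), (∀ i, u i ∈ 𝒱 (q i)) →
      μk (PiTensorProduct.tprod k u)
        = pSign k (∑ i : Fin K, ((K - 1 - (i : ℕ) : ℕ) : ZMod 2) * q i) •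
            δk (PiTensorProduct.tprod k u))
    (D : TCoalg k V →ₗ[k] TCoalg k V)
    (hD0 : ∀ (n : ℕ), n + 1 < K → ∀ v : Fin (n + 1) → V, D (elt k n v) = 0)
    (hD : ∀ (n : ℕ) (hn : K ≤ n + 1) (v : Fin (n + 1) → V) (p : Fin (n + 1) → ZMod 2),
      (∀ i, v i ∈ 𝒱 (p i)) →
      D (elt k n v) = ∑ i : Fin (n + 2 - K),
        pSign k ((∑ j : Fin (n + 1), if (j : ℕ) < (i : ℕ) then p j + 1 else 0) * qd) •
          elt k (n + 1 - K) (fun j : Fin (n + 1 - K + 1) =>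
            if h1 : (j : ℕ) < (i : ℕ) then
              v ⟨(j : ℕ), by have := j.2; have := i.2; omega⟩
            else if h2 : (j : ℕ) = (i : ℕ) then
              δk (PiTensorProduct.tprod k (fun t : Fin K =>
                v ⟨(i : ℕ) + (t : ℕ), by have := t.2; have := i.2; omega⟩))
            else v ⟨(j : ℕ) + K - 1, by have := j.2; omega⟩))
    (M : TCoalg k V →ₗ[k] TCoalg k V)
    (hM0 : ∀ (n : ℕ), n + 1 < K → ∀ v : Fin (n + 1) → V, M (elt k n v) = 0)
    (hM : ∀ (n : ℕ) (hn : K ≤ n + 1) (v : Fin (n + 1) → V) (p : Fin (n + 1) → ZMod 2),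
      (∀ i, v i ∈ 𝒱 (p i)) →
      M (elt k n v) = ∑ i : Fin (n + 2 - K),
        pSign k ((∑ j : Fin (n + 1), if (j : ℕ) < (i : ℕ) then p j else 0) *
            (qd + ((K - 1 : ℕ) : ZMod 2)) + (((i : ℕ) * (K - 1) : ℕ) : ZMod 2)) •
          elt k (n + 1 - K) (fun j : Fin (n + 1 - K + 1) =>
            if h1 : (j : ℕ) < (i : ℕ) then
              v ⟨(j : ℕ), by have := j.2; have := i.2; omega⟩
            else if h2 : (j : ℕ) = (i : ℕ) then
              μk (PiTensorProduct.tprod k (fun t : Fin K =>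
                v ⟨(i : ℕ) + (t : ℕ), by have := t.2; have := i.2; omega⟩))
            else v ⟨(j : ℕ) + K - 1, by have := j.2; omega⟩)) :
    (∀ (u : Fin K → V) (q : Fin K → ZMod 2), (∀ i, u i ∈ 𝒱 (q i)) →
      μk (PiTensorProduct.tprod k u) ∈ 𝒱 ((∑ i, q i) + (qd + ((K - 1 : ℕ) : ZMod 2)))) ∧
    (∀ (n : ℕ) (v : Fin (n + 1) → V) (p : Fin (n + 1) → ZMod 2),
      (∀ i, v i ∈ 𝒱 (p i)) →
      D (η (elt k n v))
        = pSign k (((n + 1 - K : ℕ) : ZMod 2) * (qd + ((K - 1 : ℕ) : ZMod 2))) •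
            η (M (elt k n v))) := by
  have hδ : ∀ (u : Fin K → V) (q : Fin K → ZMod 2), (∀ i, u i ∈ 𝒱 (q i)) →
      δk (PiTensorProduct.tprod k u) ∈ 𝒱 (∑ i, q i + (qd + ((K - 1 : ℕ) : ZMod 2))) :=
    fun u q hq => sum_add_one_add_one_eq hK q qd ▸ hδk u q hq
  refine ⟨fun u q hq => hμk u q hq ▸ Submodule.smul_mem _ _ (hδ u q hq), fun n v p hp => ?_⟩
  rcases lt_or_ge (n + 1) K with hsmall | hn
  · simp [hη n v p hp, hD0 n hsmall, hM0 n hsmall]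
  rw [hη n v p hp, map_smul, hD n hn v p hp, hM n hn v p hp, map_sum, smul_sum, smul_sum]
  exact sum_congr rfl fun i _ => coderivation_term_conj hη hK hδ hμk hp i (by omega)
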